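/- Let Y and Z be nonzero positive semidefinite complex matrices of the same size. Then (1/2)·‖Y/tr(Y) − Z/tr(Z)‖₁ ≤ ‖Y − Z‖₁ / max{tr(Y), tr(Z)}, where ‖·‖₁ denotes the trace norm (the sum of the singular values). -/

import Mathlib

open scoped Matrix.Norms.L2Operator ComplexOrder
open Matrix

/-- The trace norm (sum of singular values) of a square complex matrix,
realized as `tr √(Mᴴ M)`. -/
noncomputable def traceNorm {n : ℕ} (M : Matrix (Fin n) (Fin n) ℂ) : ℝ :=
  (((Matrix.posSemidef_conjTranspose_mul_self M).1.eigenvectorUnitary.1 *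
    diagonal (((↑) : ℝ → ℂ) ∘ (√·) ∘ (Matrix.posSemidef_conjTranspose_mul_self M).1.eigenvalues) *
    (star (Matrix.posSemidef_conjTranspose_mul_self M).1.eigenvectorUnitary :
      Matrix (Fin n) (Fin n) ℂ)).trace).re

/-! With `a = tr Y ≥ b = tr Z > 0`, write `Y/a - Z/b = (Y - Z)/a - (1/b - 1/a) Z`. The triangle
inequality bounds its trace norm by `(‖Y - Z‖₁ + (a - b))/a`, and `a - b = tr (Y - Z) ≤ ‖Y - Z‖₁`.

The trace norm is `tr |M|` for the continuous functional calculus `|M| = √(Mᴴ M)`. For Hermitian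
`A = A⁺ - A⁻` and `-1 ≤ S ≤ 1` one has `tr (S A) ≤ tr A⁺ + tr A⁻ = tr |A|`, with equality at
`S = sign A`; this gives the triangle inequality for Hermitian matrices. -/

open scoped MatrixOrder

namespace Matrix

section Loewner

variable {ι 𝕜 : Type*} [Fintype ι] [RCLike 𝕜]

theorem trace_mono {A B : Matrix ι ι 𝕜} (h : A ≤ B) : A.trace ≤ B.trace := by
  simpa [trace_sub] using (nonneg_iff_posSemidef.mp (sub_nonneg.mpr h)).trace_nonneg

theorem PosSemidef.trace_eq_re {P : Matrix ι ι ℂ} (hP : P.PosSemidef) : P.trace = P.trace.re :=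
  Complex.eq_re_of_ofReal_le hP.trace_nonneg

theorem PosSemidef.re_trace_pos {P : Matrix ι ι ℂ} (hP : P.PosSemidef) (h0 : P ≠ 0) :
    0 < P.trace.re := by
  refine (Complex.nonneg_iff.mp hP.trace_nonneg).1.lt_of_ne fun h => h0 ?_
  rw [← hP.trace_eq_zero_iff, hP.trace_eq_re, ← h, Complex.ofReal_zero]

variable [DecidableEq ι]

theorem trace_mul_le_trace_of_le_one {S P : Matrix ι ι 𝕜} (hS : S ≤ 1) (hP : 0 ≤ P) :
    (S * P).trace ≤ P.trace := by
  -- `tr (S B⋆B) = tr (B S B⋆) ≤ tr (B B⋆)`, since conjugation preserves the Loewner order.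
  obtain ⟨B, rfl⟩ := CStarAlgebra.nonneg_iff_eq_star_mul_self.mp hP
  have h := trace_mono (star_right_conjugate_le_conjugate hS B)
  rwa [mul_one, trace_mul_comm B (star B), trace_mul_comm (B * S), ← mul_assoc,
    trace_mul_comm] at h

theorem trace_mul_le_trace_abs {S A : Matrix ι ι 𝕜} (hS₁ : S ≤ 1) (hS₂ : -1 ≤ S)
    (hA : IsSelfAdjoint A) : (S * A).trace ≤ (CFC.abs A).trace := by
  have hneg : -S ≤ 1 := neg_le.mp hS₂
  calc (S * A).trace = (S * A⁺).trace + (-S * A⁻).trace := by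
        conv_lhs => rw [← CFC.posPart_sub_negPart A]
        rw [mul_sub, trace_sub, neg_mul, trace_neg, sub_eq_add_neg]
    _ ≤ (A⁺).trace + (A⁻).trace := add_le_add
        (trace_mul_le_trace_of_le_one hS₁ (CFC.posPart_nonneg A))
        (trace_mul_le_trace_of_le_one hneg (CFC.negPart_nonneg A))
    _ = (CFC.abs A).trace := by rw [← trace_add, CFC.posPart_add_negPart A]

theorem cfc_sign_mul_self (A : Matrix ι ι 𝕜) (hA : IsSelfAdjoint A) :
    cfc Real.sign A * A = CFC.abs A := by
  have hsign : ContinuousOn Real.sign (spectrum ℝ A) := A.finite_real_spectrum.continuousOn _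
  rw [CFC.abs_eq_cfc_norm A]
  nth_rw 2 [← cfc_id' ℝ A]
  rw [← cfc_mul ..]
  refine cfc_congr fun x _ => ?_
  rcases lt_trichotomy x 0 with hx | rfl | hx
  · simp [Real.sign_of_neg hx, abs_of_neg hx]
  · simp
  · simp [Real.sign_of_pos hx, abs_of_pos hx]

theorem trace_abs_add_le {A B : Matrix ι ι 𝕜} (hA : IsSelfAdjoint A) (hB : IsSelfAdjoint B) :
    (CFC.abs (A + B)).trace ≤ (CFC.abs A).trace + (CFC.abs B).trace := by
  have hsign : ContinuousOn Real.sign (spectrum ℝ (A + B)) :=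
    (A + B).finite_real_spectrum.continuousOn _
  have hbound : ∀ x : ℝ, -1 ≤ Real.sign x ∧ Real.sign x ≤ 1 := fun x => by
    rcases Real.sign_apply_eq x with h | h | h <;> rw [h] <;> norm_num
  have hS₁ : cfc Real.sign (A + B) ≤ 1 := cfc_le_one _ _ fun x _ => (hbound x).2
  have hS₂ : -1 ≤ cfc Real.sign (A + B) := by
    simpa using algebraMap_le_cfc Real.sign (-1) (A + B) fun x _ => (hbound x).1
  rw [← cfc_sign_mul_self _ (hA.add hB), mul_add, trace_add]
  exact add_le_add (trace_mul_le_trace_abs hS₁ hS₂ hA) (trace_mul_le_trace_abs hS₁ hS₂ hB)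

theorem abs_re_trace_le_re_trace_abs {A : Matrix ι ι 𝕜} (hA : IsSelfAdjoint A) :
    |RCLike.re A.trace| ≤ RCLike.re (CFC.abs A).trace := by
  have h₁ := trace_mul_le_trace_abs le_rfl (neg_le_self zero_le_one) hA
  have h₂ := trace_mul_le_trace_abs (neg_le_self zero_le_one) le_rfl hA
  rw [one_mul] at h₁
  rw [neg_one_mul, trace_neg] at h₂
  rw [abs_le, neg_le]
  exact ⟨by simpa using RCLike.re_le_re h₂, RCLike.re_le_re h₁⟩

end Loewner

section TraceNorm

variable {n : ℕ}

theorem traceNorm_eq_re_trace_abs (M : Matrix (Fin n) (Fin n) ℂ) :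
    traceNorm M = (CFC.abs M).trace.re := by
  have hM := posSemidef_conjTranspose_mul_self M
  have h : CFC.abs M = cfc Real.sqrt (Mᴴ * M) := by
    rw [CFC.abs, CFC.sqrt_eq_real_sqrt (star M * M) hM.nonneg, cfcₙ_eq_cfc]; rfl
  rw [h, hM.1.cfc_eq, IsHermitian.cfc, Unitary.conjStarAlgAut_apply]
  rfl

theorem traceNorm_neg (M : Matrix (Fin n) (Fin n) ℂ) : traceNorm (-M) = traceNorm M := by
  rw [traceNorm_eq_re_trace_abs, traceNorm_eq_re_trace_abs, CFC.abs_neg]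

theorem traceNorm_smul (c : ℂ) (M : Matrix (Fin n) (Fin n) ℂ) :
    traceNorm (c • M) = ‖c‖ * traceNorm M := by
  rw [traceNorm_eq_re_trace_abs, traceNorm_eq_re_trace_abs, CFC.abs_smul, trace_smul,
    Complex.smul_re, smul_eq_mul]

theorem PosSemidef.traceNorm_eq {P : Matrix (Fin n) (Fin n) ℂ} (hP : P.PosSemidef) :
    traceNorm P = P.trace.re := by
  rw [traceNorm_eq_re_trace_abs, CFC.abs_of_nonneg P hP.nonneg]

theorem IsHermitian.traceNorm_add_le {A B : Matrix (Fin n) (Fin n) ℂ} (hA : A.IsHermitian)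
    (hB : B.IsHermitian) : traceNorm (A + B) ≤ traceNorm A + traceNorm B := by
  simp only [traceNorm_eq_re_trace_abs, ← Complex.add_re]
  exact Complex.re_le_re (trace_abs_add_le hA.isSelfAdjoint hB.isSelfAdjoint)

theorem IsHermitian.traceNorm_sub_le {A B : Matrix (Fin n) (Fin n) ℂ} (hA : A.IsHermitian)
    (hB : B.IsHermitian) : traceNorm (A - B) ≤ traceNorm A + traceNorm B := by
  simpa [sub_eq_add_neg, traceNorm_neg] using IsHermitian.traceNorm_add_le hA hB.neg

theorem IsHermitian.abs_re_trace_le_traceNorm {A : Matrix (Fin n) (Fin n) ℂ}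
    (hA : A.IsHermitian) : |A.trace.re| ≤ traceNorm A := by
  rw [traceNorm_eq_re_trace_abs]
  exact abs_re_trace_le_re_trace_abs hA.isSelfAdjoint

theorem PosSemidef.traceNorm_trace_inv_smul_sub_le {Y Z : Matrix (Fin n) (Fin n) ℂ}
    (hY : Y.PosSemidef) (hZ : Z.PosSemidef) (hZ0 : Z ≠ 0) (hle : Z.trace.re ≤ Y.trace.re) :
    traceNorm (Y.trace⁻¹ • Y - Z.trace⁻¹ • Z) ≤ 2 * (traceNorm (Y - Z) / Y.trace.re) := by
  set a := Y.trace.re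
  set b := Z.trace.re
  have hb : 0 < b := hZ.re_trace_pos hZ0
  have ha : 0 < a := hb.trans_le hle
  have hT : a - b ≤ traceNorm (Y - Z) := by
    simpa [trace_sub] using (le_abs_self _).trans (hY.1.sub hZ.1).abs_re_trace_le_traceNorm
  have hdecomp : Y.trace⁻¹ • Y - Z.trace⁻¹ • Z
      = ((a⁻¹ : ℝ) : ℂ) • (Y - Z) - ((b⁻¹ - a⁻¹ : ℝ) : ℂ) • Z := by
    rw [hY.trace_eq_re, hZ.trace_eq_re]
    push_cast
    module
  calc traceNorm (Y.trace⁻¹ • Y - Z.trace⁻¹ • Z)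
      ≤ a⁻¹ * traceNorm (Y - Z) + (b⁻¹ - a⁻¹) * b := by
        rw [hdecomp]
        refine (IsHermitian.traceNorm_sub_le ((hY.1.sub hZ.1).smul (Complex.conj_ofReal _))
          (hZ.1.smul (Complex.conj_ofReal _))).trans_eq ?_
        rw [traceNorm_smul, traceNorm_smul, hZ.traceNorm_eq, Complex.norm_real, Complex.norm_real,
          Real.norm_of_nonneg (inv_nonneg.mpr ha.le),
          Real.norm_of_nonneg (sub_nonneg.mpr (inv_anti₀ hb hle))]
    _ = (traceNorm (Y - Z) + (a - b)) / a := by field_simp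
    _ ≤ 2 * (traceNorm (Y - Z) / a) := by
        rw [mul_div_assoc', two_mul]
        gcongr

end TraceNorm

end Matrix

/-- Claim 1: distance between normalized PSD matrices. -/
theorem normalized_psd_trace_dist {n : ℕ} (Y Z : Matrix (Fin n) (Fin n) ℂ)
    (hY : Y.PosSemidef) (hY0 : Y ≠ 0) (hZ : Z.PosSemidef) (hZ0 : Z ≠ 0) :
    (1/2) * traceNorm (Y.trace⁻¹ • Y - Z.trace⁻¹ • Z) ≤
      traceNorm (Y - Z) / max Y.trace.re Z.trace.re := by
  wlog hle : Z.trace.re ≤ Y.trace.re generalizing Y Z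
  · have h := this Z Y hZ hZ0 hY hY0 (le_of_not_ge hle)
    rwa [max_comm, ← neg_sub Y Z, traceNorm_neg, ← neg_sub, traceNorm_neg] at h
  rw [max_eq_left hle]
  have := hY.traceNorm_trace_inv_smul_sub_le hZ hZ0 hle
  linarith
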